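/- arXiv:2101.05999 — 2 statements merged into one kernel-verified Lean document; each statement's English description precedes it below -/
import Mathlib

section
/- Let f be a loop-count function on states of n crossings. Then for every state s, ōdeg w(s) ≤ ōdeg w(s_A) and u̲deg w(s) ≥ u̲deg w(s_B), where s_A and s_B are the constant-false and constant-true states. -/
open LaurentPolynomial

/-- Maximal degree (max of the support), with convention `odeg 0 = 0`. -/
noncomputable def odeg (g : LaurentPolynomial ℤ) : ℤ := WithBot.unbotD 0 g.coeff.support.max

/-- Minimal degree (min of the support), with convention `udeg 0 = 0`. -/
noncomputable def udeg (g : LaurentPolynomial ℤ) : ℤ := WithTop.untopD 0 g.coeff.support.min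

/-- The span of a Laurent polynomial. -/
noncomputable def lspan (g : LaurentPolynomial ℤ) : ℤ := odeg g - udeg g

/-- Number of crossings spliced by an A-splice in the state `s`. -/
def alpha {n : ℕ} (s : Fin n → Bool) : ℕ :=
  (Finset.univ.filter (fun i => s i = false)).card

/-- Number of crossings spliced by a B-splice in the state `s`. -/
def beta {n : ℕ} (s : Fin n → Bool) : ℕ :=
  (Finset.univ.filter (fun i => s i = true)).card

/-- A loop-count function: at least one loop in every state, and changing the
splice at one crossing changes the number of loops by at most one. -/
def IsLoopCount {n : ℕ} (f : (Fin n → Bool) → ℕ) : Prop :=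
  (∀ s, 1 ≤ f s) ∧
    ∀ (s : Fin n → Bool) (i : Fin n),
      |(f (Function.update s i (!(s i))) : ℤ) - (f s : ℤ)| ≤ 1

/-- The weight `A^(α(s)-β(s)) * (-A^2 - A^(-2))^(f(s)-1)` of a state `s`. -/
noncomputable def weight {n : ℕ} (f : (Fin n → Bool) → ℕ) (s : Fin n → Bool) :
    LaurentPolynomial ℤ :=
  T ((alpha s : ℤ) - (beta s : ℤ)) * (-T 2 - T (-2)) ^ (f s - 1)

/-- The Kauffman bracket of a loop-count function: the sum of the weights. -/
noncomputable def bracket {n : ℕ} (f : (Fin n → Bool) → ℕ) : LaurentPolynomial ℤ :=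
  ∑ s : Fin n → Bool, weight f s

/-!
Since `-A² - A⁻² = A⁻² · (-(1 + A⁴))`, the weight of `s` is `A^(α - β - 2k)` times the ordinary
polynomial `(-(1 + A⁴))^k` with `k = f(s) - 1`, whose exponents run exactly from `0` to `4k`.
Hence `ōdeg w(s) = α - β + 2k` and `u̲deg w(s) = α - β - 2k`. The state `s` differs from `s_A`
at `β(s)` crossings and each change of splice changes `f` by at most one, so
`f(s) ≤ f(s_A) + β(s)`; together with `α + β = n` this is the bound on `ōdeg`, and symmetrically
`f(s) ≤ f(s_B) + α(s)` gives the bound on `u̲deg`.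
-/

open Polynomial

lemma odeg_eq_of_isGreatest {g : LaurentPolynomial ℤ} {x : ℤ}
    (h : IsGreatest (g.coeff.support : Set ℤ) x) : odeg g = x := by
  rw [odeg, le_antisymm (Finset.max_le fun y hy => WithBot.coe_le_coe.2 (h.2 hy))
    (Finset.le_max h.1), WithBot.unbotD_coe]

lemma udeg_eq_of_isLeast {g : LaurentPolynomial ℤ} {x : ℤ}
    (h : IsLeast (g.coeff.support : Set ℤ) x) : udeg g = x := by
  rw [udeg, le_antisymm (Finset.min_le h.1)
    (Finset.le_min fun y hy => WithTop.coe_le_coe.2 (h.2 hy)), WithTop.untopD_coe]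

lemma mem_support_coeff_toLaurent_mul_T {R : Type*} [Semiring R] {p : R[X]} {m k : ℤ} :
    k ∈ (toLaurent p * T m).coeff.support ↔ ∃ a ∈ p.support, (a : ℤ) + m = k := by
  have hshift : (toLaurent p * T m).coeff.support =
      (toLaurent p).coeff.support.map (addRightEmbedding m) :=
    AddMonoidAlgebra.support_coeff_mul_single _ 1 (by simp) m
  rw [hshift, support_coeff_toLaurent]
  simp

lemma odeg_toLaurent_mul_T {p : ℤ[X]} (hp : p ≠ 0) (m : ℤ) :
    odeg (toLaurent p * T m) = p.natDegree + m := by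
  refine odeg_eq_of_isGreatest ⟨?_, ?_⟩
  · exact mem_support_coeff_toLaurent_mul_T.2 ⟨_, natDegree_mem_support_of_nonzero hp, rfl⟩
  · rintro k hk
    obtain ⟨a, ha, rfl⟩ := mem_support_coeff_toLaurent_mul_T.1 hk
    simpa using le_natDegree_of_mem_supp a ha

lemma udeg_toLaurent_mul_T {p : ℤ[X]} (hp : p ≠ 0) (m : ℤ) :
    udeg (toLaurent p * T m) = p.natTrailingDegree + m := by
  refine udeg_eq_of_isLeast ⟨?_, ?_⟩
  · exact mem_support_coeff_toLaurent_mul_T.2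
      ⟨_, natTrailingDegree_mem_support_of_nonzero hp, rfl⟩
  · rintro k hk
    obtain ⟨a, ha, rfl⟩ := mem_support_coeff_toLaurent_mul_T.1 hk
    simpa using natTrailingDegree_le_of_mem_supp a ha

noncomputable def loopPoly : ℤ[X] := -(1 + X ^ 4)

lemma toLaurent_loopPoly_mul_T : toLaurent loopPoly * T (-2) = -T 2 - T (-2) := by
  simp only [loopPoly, map_neg, map_add, map_one, toLaurent_X_pow, neg_mul, add_mul, one_mul,
    ← T_add]
  norm_num
  ring

lemma loopPoly_pow_ne_zero (k : ℕ) : loopPoly ^ k ≠ 0 := by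
  refine pow_ne_zero _ fun h => ?_
  simpa [loopPoly] using congrArg (coeff · 0) h

lemma natDegree_loopPoly_pow (k : ℕ) : (loopPoly ^ k).natDegree = 4 * k := by
  rw [natDegree_pow, loopPoly, natDegree_neg, mul_comm]
  congr
  compute_degree!

lemma natTrailingDegree_loopPoly_pow (k : ℕ) : (loopPoly ^ k).natTrailingDegree = 0 := by
  simp [loopPoly, coeff_zero_eq_eval_zero]

section States

variable {n : ℕ}

lemma weight_eq_toLaurent_mul_T (f : (Fin n → Bool) → ℕ) (s : Fin n → Bool) :
    weight f s = toLaurent (loopPoly ^ (f s - 1))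
      * T ((alpha s : ℤ) - beta s - 2 * ((f s - 1 : ℕ) : ℤ)) := by
  rw [weight, ← toLaurent_loopPoly_mul_T, mul_pow, map_pow, T_pow, mul_left_comm, ← T_add]
  congr 2
  ring

lemma odeg_weight (f : (Fin n → Bool) → ℕ) (s : Fin n → Bool) :
    odeg (weight f s) = (alpha s : ℤ) - beta s + 2 * ((f s - 1 : ℕ) : ℤ) := by
  rw [weight_eq_toLaurent_mul_T, odeg_toLaurent_mul_T (loopPoly_pow_ne_zero _),
    natDegree_loopPoly_pow]
  push_cast
  ring

lemma udeg_weight (f : (Fin n → Bool) → ℕ) (s : Fin n → Bool) :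
    udeg (weight f s) = (alpha s : ℤ) - beta s - 2 * ((f s - 1 : ℕ) : ℤ) := by
  rw [weight_eq_toLaurent_mul_T, udeg_toLaurent_mul_T (loopPoly_pow_ne_zero _),
    natTrailingDegree_loopPoly_pow, Nat.cast_zero, zero_add]

lemma alpha_add_beta (s : Fin n → Bool) : alpha s + beta s = n := by
  simpa [alpha, beta] using
    Finset.card_filter_add_card_filter_not (s := Finset.univ) (fun i => s i = false)

lemma alpha_const_false : alpha (fun _ : Fin n => false) = n := by simp [alpha]

lemma beta_const_false : beta (fun _ : Fin n => false) = 0 := by simp [beta]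

lemma alpha_const_true : alpha (fun _ : Fin n => true) = 0 := by simp [alpha]

lemma beta_const_true : beta (fun _ : Fin n => true) = n := by simp [beta]

lemma hammingDist_const_false (s : Fin n → Bool) : hammingDist s (fun _ => false) = beta s := by
  simp [hammingDist, beta]

lemma hammingDist_const_true (s : Fin n → Bool) : hammingDist s (fun _ => true) = alpha s := by
  simp [hammingDist, alpha]

end States

lemma hammingDist_update_add_one {ι : Type*} [Fintype ι] [DecidableEq ι] {β : ι → Type*}
    [∀ i, DecidableEq (β i)] {x y : ∀ i, β i} {i : ι} (h : x i ≠ y i) :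
    hammingDist (Function.update x i (y i)) y + 1 = hammingDist x y := by
  have hfilter : ({j | Function.update x i (y i) j ≠ y j} : Finset ι) =
      ({j | x j ≠ y j} : Finset ι).erase i := by
    ext j
    by_cases hj : j = i <;> simp [hj]
  rw [hammingDist, hammingDist, hfilter, Finset.card_erase_add_one (by simpa using h)]

namespace IsLoopCount

variable {n : ℕ} {f : (Fin n → Bool) → ℕ}

lemma le_update_add_one (hf : IsLoopCount f) (s : Fin n → Bool) (i : Fin n) (b : Bool) :
    (f s : ℤ) ≤ f (Function.update s i b) + 1 := by
  by_cases hb : b = s i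
  · simp [hb]
  · rw [Bool.eq_not_of_ne hb]
    linarith [(abs_le.1 (hf.2 s i)).1]

lemma le_add_hammingDist (hf : IsLoopCount f) (s t : Fin n → Bool) :
    (f s : ℤ) ≤ f t + hammingDist s t := by
  induction h : hammingDist s t generalizing s with
  | zero => simp [hammingDist_eq_zero.1 h]
  | succ k ih =>
    obtain ⟨i, hi⟩ := Function.ne_iff.1 (hammingDist_ne_zero.1 (h.trans_ne k.succ_ne_zero))
    have hcloser := hammingDist_update_add_one hi
    have hstep := hf.le_update_add_one s i (t i)
    have hrest := ih (Function.update s i (t i)) (by omega)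
    push_cast
    linarith

end IsLoopCount

/-- For a loop-count function `f` and any state `s`,
`ōdeg w(s) ≤ ōdeg w(s_A)` and `u̲deg w(s) ≥ u̲deg w(s_B)`. -/
theorem odeg_weight_le_and_udeg_weight_ge {n : ℕ} (f : (Fin n → Bool) → ℕ)
    (hf : IsLoopCount f) (s : Fin n → Bool) :
    odeg (weight f s) ≤ odeg (weight f (fun _ => false)) ∧
    udeg (weight f s) ≥ udeg (weight f (fun _ => true)) := by
  have hA := hf.le_add_hammingDist s (fun _ => false)
  have hB := hf.le_add_hammingDist s (fun _ => true)
  rw [hammingDist_const_false] at hA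
  rw [hammingDist_const_true] at hB
  have hn := alpha_add_beta s
  rw [odeg_weight, odeg_weight, udeg_weight, udeg_weight, alpha_const_false, beta_const_false,
    alpha_const_true, beta_const_true]
  omega
end

section
/- Let f be a loop-count function on states of n crossings that is A-pseudo-adequate, i.e. f(Function.update s_A i true) ≤ f(s_A) for every index i. Then for every state s with β(s) ≥ 1, one has f(s) ≤ f(s_A) + β(s) − 1. -/
open LaurentPolynomial

def stateOf {n : ℕ} (S : Finset (Fin n)) : Fin n → Bool := fun i => decide (i ∈ S)

lemma stateOf_filter_eq_true {n : ℕ} (s : Fin n → Bool) :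
    stateOf (Finset.univ.filter (fun i => s i = true)) = s := by
  funext i
  simp [stateOf]

lemma stateOf_singleton {n : ℕ} (i : Fin n) :
    stateOf {i} = Function.update (fun _ => false) i true := by
  funext j
  by_cases h : j = i <;> simp [stateOf, h]

lemma stateOf_cons {n : ℕ} (i : Fin n) (S : Finset (Fin n)) (hi : i ∉ S) :
    stateOf (Finset.cons i S hi) = Function.update (stateOf S) i true := by
  funext j
  by_cases h : j = i <;> simp [stateOf, h]

lemma IsLoopCount.le_update_add_one_s6 {n : ℕ} {f : (Fin n → Bool) → ℕ} (hf : IsLoopCount f)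
    (s : Fin n → Bool) (i : Fin n) (b : Bool) :
    (f (Function.update s i b) : ℤ) ≤ f s + 1 := by
  by_cases hb : b = s i
  · simp [hb]
  · obtain rfl : b = !s i := by cases b <;> cases h : s i <;> simp_all
    linarith [(abs_le.mp (hf.2 s i)).2]

/-- The first B-splice adds no loop by pseudo-adequacy, each further one at most one loop. -/
lemma IsLoopCount.stateOf_le_add_card_sub_one {n : ℕ} {f : (Fin n → Bool) → ℕ}
    (hf : IsLoopCount f)
    (hA : ∀ i : Fin n, f (Function.update (fun _ => false) i true) ≤ f (fun _ => false))
    {S : Finset (Fin n)} (hS : S.Nonempty) :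
    (f (stateOf S) : ℤ) ≤ f (fun _ => false) + S.card - 1 := by
  induction hS using Finset.Nonempty.cons_induction with
  | singleton i =>
    rw [stateOf_singleton, Finset.card_singleton]
    push_cast
    linarith [(Nat.cast_le (α := ℤ)).mpr (hA i)]
  | cons i S hi _ ih =>
    rw [stateOf_cons, Finset.card_cons]
    push_cast
    linarith [hf.le_update_add_one_s6 (stateOf S) i true]

/-- If `f` is A-pseudo-adequate, then for every state `s` with `β(s) ≥ 1`,
`f(s) ≤ f(s_A) + β(s) - 1`. -/
theorem loopCount_le_sA_add_beta_sub_one {n : ℕ} (f : (Fin n → Bool) → ℕ)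
    (hf : IsLoopCount f)
    (hA : ∀ i : Fin n, f (Function.update (fun _ => false) i true) ≤ f (fun _ => false))
    (s : Fin n → Bool) (hs : 1 ≤ beta s) :
    (f s : ℤ) ≤ (f (fun _ => false) : ℤ) + (beta s : ℤ) - 1 := by
  have hB : (Finset.univ.filter (fun i => s i = true)).Nonempty :=
    Finset.card_pos.mp hs
  simpa only [stateOf_filter_eq_true, beta] using hf.stateOf_le_add_card_sub_one hA hB
end
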